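/- Let A be a 3×3 zero-one coloring matrix with rows (1,1,1), (0,1,0), (0,0,1). Then for all n ≥ 1, the total number of A-colored plane trees on n vertices is (2^n + 1)·C_{n-1}; specifically, there are C_{n-1} trees with root color 2, C_{n-1} trees with root color 3, and (2^n − 1)·C_{n-1} trees with root color 1 for n ≥ 2. -/

import Mathlib

/-!
Detaching the leftmost subtree of the root splits a colored tree with `n + 2` vertices into
that subtree and the rest of the tree (`consChild`), so the counts by root color satisfy
convolution recurrences. Colors 2 and 3 only have children of their own color, so their counts
obey Catalan's recurrence. For root color 1, the number `r n` of trees with `n + 1` vertices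
satisfies `r (n + 1) = ∑_{i+j=n} (r i + 2 C_i) r j`, which `(2^(n+1) - 1) C_n` solves: after
substitution the terms `2^(i+1) C_i C_j` and `2^(j+1) C_i C_j` cancel by symmetry of the
antidiagonal, and what is left is Catalan's convolution.
-/

inductive CTree (α : Type) : Type
  | node : α → List (CTree α) → CTree α

namespace CTree

def color {α : Type} : CTree α → α
  | node c _ => c

def children {α : Type} : CTree α → List (CTree α)
  | node _ ts => ts

def size {α : Type} : CTree α → ℕ
  | node _ ts => 1 + (ts.attach.map fun t => size t.1).sum
decreasing_by
  have := List.sizeOf_lt_of_mem t.2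
  simp only [CTree.node.sizeOf_spec]
  omega

def Valid {α : Type} (A : Matrix α α ℕ) : CTree α → Prop
  | node c ts => ∀ t ∈ ts, A c t.color = 1 ∧ Valid A t

end CTree

/-- Number of `A`-colored plane trees with `n` vertices and root color `i`. -/
noncomputable def colorCount {m : ℕ} (A : Matrix (Fin m) (Fin m) ℕ) (i : Fin m) (n : ℕ) : ℕ :=
  {t : CTree (Fin m) | t.Valid A ∧ t.size = n ∧ t.color = i}.ncard

/-- Total number of `A`-colored plane trees with `n` vertices. -/
noncomputable def totalCount {α : Type} (A : Matrix α α ℕ) (n : ℕ) : ℕ :=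
  {t : CTree α | t.Valid A ∧ t.size = n}.ncard

open Finset

namespace CTree

variable {α : Type}

@[simp] lemma size_node (c : α) (ts : List (CTree α)) :
    (node c ts).size = 1 + (ts.map size).sum := by
  simp [size]

@[simp] lemma color_node (c : α) (ts : List (CTree α)) : (node c ts).color = c := rfl

@[simp] lemma valid_node (A : Matrix α α ℕ) (c : α) (ts : List (CTree α)) :
    (node c ts).Valid A ↔ ∀ t ∈ ts, A c t.color = 1 ∧ t.Valid A := by
  rw [Valid]

lemma size_pos (t : CTree α) : 0 < t.size := by
  cases t; simp

def consChild (t s : CTree α) : CTree α := node s.color (t :: s.children)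

@[simp] lemma size_consChild (t s : CTree α) : (consChild t s).size = t.size + s.size := by
  cases s; simp [consChild, children]; omega

@[simp] lemma color_consChild (t s : CTree α) : (consChild t s).color = s.color := rfl

@[simp] lemma valid_consChild (A : Matrix α α ℕ) (t s : CTree α) :
    (consChild t s).Valid A ↔ A s.color t.color = 1 ∧ t.Valid A ∧ s.Valid A := by
  cases s; simp [consChild, children, and_assoc]

lemma consChild_injective2 : Function.Injective2 (consChild : CTree α → CTree α → CTree α) := by
  rintro t t' ⟨c, ts⟩ ⟨c', ts'⟩ h
  simp only [consChild, color_node, children, node.injEq, List.cons.injEq] at h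
  obtain ⟨rfl, rfl, rfl⟩ := h
  exact ⟨rfl, rfl⟩

lemma exists_eq_consChild {t : CTree α} (ht : 1 < t.size) : ∃ t₁ s, t = consChild t₁ s := by
  obtain ⟨c, _ | ⟨t₁, ts⟩⟩ := t
  · simp at ht
  · exact ⟨t₁, node c ts, rfl⟩

lemma size_eq_one_iff {t : CTree α} : t.size = 1 ↔ ∃ c, t = node c [] := by
  obtain ⟨c, _ | ⟨t₁, ts⟩⟩ := t
  · simp
  · simp only [size_node, List.map_cons, List.sum_cons, node.injEq, reduceCtorEq, and_false,
      exists_false, iff_false]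
    have := size_pos t₁
    omega

section treesOfSize

variable [Fintype α]

open scoped Classical in
noncomputable def treesOfSize : ℕ → Finset (CTree α)
  | 0 => ∅
  | 1 => univ.image fun c => node c []
  | n + 2 => (antidiagonal n).attach.biUnion fun ij =>
      (treesOfSize (ij.1.1 + 1) ×ˢ treesOfSize (ij.1.2 + 1)).image fun p => consChild p.1 p.2
decreasing_by
  all_goals have := HasAntidiagonal.mem_antidiagonal.mp ij.2; omega

@[simp] lemma mem_treesOfSize {n : ℕ} {t : CTree α} : t ∈ treesOfSize n ↔ t.size = n := by
  induction n using Nat.strong_induction_on generalizing t with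
  | _ n ih =>
    match n with
    | 0 => simp [treesOfSize, (size_pos t).ne']
    | 1 => simp [treesOfSize, size_eq_one_iff, eq_comm]
    | n + 2 =>
      simp only [treesOfSize, mem_biUnion, mem_attach, true_and, mem_image, mem_product,
        Subtype.exists, HasAntidiagonal.mem_antidiagonal, Prod.exists]
      constructor
      · rintro ⟨i, j, hij, t₁, s, ⟨h₁, hs⟩, rfl⟩
        rw [ih (i + 1) (by omega)] at h₁
        rw [ih (j + 1) (by omega)] at hs
        simp only [size_consChild]; omega
      · intro ht
        obtain ⟨t₁, s, rfl⟩ := exists_eq_consChild (t := t) (by omega)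
        have := size_pos t₁
        have := size_pos s
        simp only [size_consChild] at ht
        refine ⟨t₁.size - 1, s.size - 1, by omega, t₁, s, ⟨?_, ?_⟩, rfl⟩
        · rw [ih (t₁.size - 1 + 1) (by omega)]; omega
        · rw [ih (s.size - 1 + 1) (by omega)]; omega

end treesOfSize

end CTree

section counting

open CTree
open scoped Classical

variable {m : ℕ} (A : Matrix (Fin m) (Fin m) ℕ)

lemma colorCount_eq_card (c : Fin m) (n : ℕ) :
    colorCount A c n = #{t ∈ treesOfSize n | t.Valid A ∧ t.color = c} := by
  rw [colorCount, ← Set.ncard_coe_finset]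
  congr 1
  ext t
  simp [and_left_comm]

lemma card_valid_color_mem (s : Finset (Fin m)) (n : ℕ) :
    #{t ∈ treesOfSize n | t.Valid A ∧ t.color ∈ s} = ∑ c ∈ s, colorCount A c n := by
  rw [card_eq_sum_card_fiberwise (f := color) (t := s) fun t ht => (mem_filter.mp ht).2.2]
  refine sum_congr rfl fun c hc => ?_
  rw [colorCount_eq_card, filter_filter]
  exact congrArg card <| filter_congr fun t _ =>
    ⟨fun h => ⟨h.1.1, h.2⟩, fun h => ⟨⟨h.1, h.2 ▸ hc⟩, h.2⟩⟩

lemma totalCount_eq_sum_colorCount (n : ℕ) : totalCount A n = ∑ c, colorCount A c n := by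
  rw [← card_valid_color_mem, totalCount, ← Set.ncard_coe_finset]
  congr 1
  ext t
  simp [and_comm]

lemma colorCount_one (c : Fin m) : colorCount A c 1 = 1 := by
  rw [colorCount_eq_card, card_eq_one]
  refine ⟨node c [], ?_⟩
  ext t
  simp only [mem_filter, mem_treesOfSize, size_eq_one_iff, mem_singleton]
  constructor
  · rintro ⟨⟨c', rfl⟩, -, rfl⟩
    rfl
  · rintro rfl
    simp

lemma colorCount_add_two (c : Fin m) (n : ℕ) :
    colorCount A c (n + 2) = ∑ ij ∈ antidiagonal n,
      (∑ c' ∈ {c' | A c c' = 1}, colorCount A c' (ij.1 + 1)) * colorCount A c (ij.2 + 1) := by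
  simp_rw [← card_valid_color_mem, colorCount_eq_card, ← card_product]
  rw [← card_sigma]
  symm
  refine card_bij (fun p _ => consChild p.2.1 p.2.2) ?_ ?_ ?_
  · rintro ⟨⟨i, j⟩, t, s⟩ hp
    simp only [mem_sigma, HasAntidiagonal.mem_antidiagonal, mem_product, mem_filter,
      mem_treesOfSize, mem_univ, true_and] at hp
    obtain ⟨hij, ⟨ht, hvt, hct⟩, hs, hvs, rfl⟩ := hp
    simp only [mem_filter, mem_treesOfSize, size_consChild, valid_consChild, color_consChild,
      and_true]
    exact ⟨by omega, hct, hvt, hvs⟩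
  · rintro ⟨⟨i, j⟩, t, s⟩ hp ⟨⟨i', j'⟩, t', s'⟩ hp' h
    obtain ⟨rfl, rfl⟩ := consChild_injective2 h
    simp only [mem_sigma, HasAntidiagonal.mem_antidiagonal, mem_product, mem_filter,
      mem_treesOfSize] at hp hp'
    obtain rfl : i = i' := by omega
    obtain rfl : j = j' := by omega
    rfl
  · intro t ht
    simp only [mem_filter, mem_treesOfSize] at ht
    obtain ⟨hsize, hv, hc⟩ := ht
    obtain ⟨t₁, s, rfl⟩ := exists_eq_consChild (t := t) (by omega)
    have := size_pos t₁
    have := size_pos s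
    simp only [size_consChild, valid_consChild, color_consChild] at hsize hv hc
    refine ⟨⟨(t₁.size - 1, s.size - 1), t₁, s⟩, ?_, rfl⟩
    simp only [mem_sigma, HasAntidiagonal.mem_antidiagonal, mem_product, mem_filter,
      mem_treesOfSize, mem_univ, true_and]
    exact ⟨by omega, ⟨by omega, hv.2.1, hc ▸ hv.1⟩, ⟨by omega, hv.2.2, hc⟩⟩

end counting

lemma eq_catalan_of_succ_eq_sum_antidiagonal {f : ℕ → ℕ} (h0 : f 0 = 1)
    (hsucc : ∀ n, f (n + 1) = ∑ ij ∈ antidiagonal n, f ij.1 * f ij.2) (n : ℕ) :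
    f n = catalan n := by
  induction n using Nat.strong_induction_on with
  | _ n ih =>
    rcases n with _ | n
    · rw [h0, catalan_zero]
    · rw [hsucc, catalan_succ']
      refine sum_congr rfl fun ij hij => ?_
      have := HasAntidiagonal.mem_antidiagonal.mp hij
      rw [ih ij.1 (by omega), ih ij.2 (by omega)]

lemma eq_two_pow_sub_one_mul_catalan {f : ℕ → ℕ} (h0 : f 0 = 1)
    (hsucc : ∀ n, f (n + 1) = ∑ ij ∈ antidiagonal n, (f ij.1 + 2 * catalan ij.1) * f ij.2)
    (n : ℕ) : f n = (2 ^ (n + 1) - 1) * catalan n := by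
  zify [Nat.one_le_two_pow]
  induction n using Nat.strong_induction_on with
  | _ n ih =>
    rcases n with _ | n
    · simp [h0]
    · set C : ℕ × ℕ → ℤ := fun ij => catalan ij.1 * catalan ij.2
      have hC : (catalan (n + 1) : ℤ) = ∑ ij ∈ antidiagonal n, C ij := by
        rw [catalan_succ']
        push_cast
        rfl
      have hswap : ∑ ij ∈ antidiagonal n, 2 ^ (ij.2 + 1) * C ij =
          ∑ ij ∈ antidiagonal n, 2 ^ (ij.1 + 1) * C ij := by
        rw [← Nat.sum_antidiagonal_swap]
        simp only [C, Prod.fst_swap, Prod.snd_swap, mul_comm]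
      calc (f (n + 1) : ℤ)
          = ∑ ij ∈ antidiagonal n, ((f ij.1 : ℤ) + 2 * catalan ij.1) * f ij.2 := by
            rw [hsucc]
            push_cast
            rfl
        _ = ∑ ij ∈ antidiagonal n,
              ((2 ^ (n + 2) - 1) * C ij + (2 ^ (ij.2 + 1) * C ij - 2 ^ (ij.1 + 1) * C ij)) := by
            refine sum_congr rfl fun ij hij => ?_
            have hij := HasAntidiagonal.mem_antidiagonal.mp hij
            rw [ih ij.1 (by omega), ih ij.2 (by omega),
              show n + 2 = ij.1 + 1 + (ij.2 + 1) by omega, pow_add]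
            ring
        _ = (2 ^ (n + 1 + 1) - 1) * catalan (n + 1) := by
            rw [sum_add_distrib, sum_sub_distrib, hswap, sub_self, add_zero, ← mul_sum, hC]

/-- For the matrix with rows `(1,1,1), (0,1,0), (0,0,1)`: the total count is
`(2^n + 1)·C_{n-1}`, trees with root color 2 or 3 are counted by `C_{n-1}`, and trees
with root color 1 are counted by `(2^n - 1)·C_{n-1}` for `n ≥ 2`. -/
theorem stmt18 :
    (∀ n, 1 ≤ n →
      totalCount (!![1, 1, 1; 0, 1, 0; 0, 0, 1] : Matrix (Fin 3) (Fin 3) ℕ) n =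
        (2 ^ n + 1) * catalan (n - 1)) ∧
    (∀ n, 1 ≤ n →
      colorCount (!![1, 1, 1; 0, 1, 0; 0, 0, 1] : Matrix (Fin 3) (Fin 3) ℕ) 1 n =
        catalan (n - 1)) ∧
    (∀ n, 1 ≤ n →
      colorCount (!![1, 1, 1; 0, 1, 0; 0, 0, 1] : Matrix (Fin 3) (Fin 3) ℕ) 2 n =
        catalan (n - 1)) ∧
    (∀ n, 2 ≤ n →
      colorCount (!![1, 1, 1; 0, 1, 0; 0, 0, 1] : Matrix (Fin 3) (Fin 3) ℕ) 0 n =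
        (2 ^ n - 1) * catalan (n - 1)) := by
  set A : Matrix (Fin 3) (Fin 3) ℕ := !![1, 1, 1; 0, 1, 0; 0, 0, 1]
  have hrow₀ : ({c | A 0 c = 1} : Finset (Fin 3)) = univ := by decide
  have hrow : ∀ c ≠ 0, ({c' | A c c' = 1} : Finset (Fin 3)) = {c} := by decide
  have hleaf : ∀ c ≠ 0, ∀ n, colorCount A c (n + 1) = catalan n := fun c hc =>
    eq_catalan_of_succ_eq_sum_antidiagonal (colorCount_one A c) fun n => by
      rw [colorCount_add_two, hrow c hc]
      simp only [sum_singleton]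
  have hroot : ∀ n, colorCount A 0 (n + 1) = (2 ^ (n + 1) - 1) * catalan n :=
    eq_two_pow_sub_one_mul_catalan (colorCount_one A 0) fun n => by
      rw [colorCount_add_two, hrow₀]
      simp only [Fin.sum_univ_three, hleaf 1 (by decide), hleaf 2 (by decide), add_assoc, two_mul]
  refine ⟨fun n hn => ?_, fun n hn => ?_, fun n hn => ?_, fun n hn => ?_⟩ <;>
    obtain ⟨n, rfl⟩ : ∃ k, n = k + 1 := ⟨n - 1, by omega⟩ <;>
    rw [Nat.add_sub_cancel]
  · rw [totalCount_eq_sum_colorCount, Fin.sum_univ_three, hroot, hleaf 1 (by decide),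
      hleaf 2 (by decide)]
    zify [Nat.one_le_two_pow]
    ring
  · exact hleaf 1 (by decide) n
  · exact hleaf 2 (by decide) n
  · exact hroot n
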